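/- Suppose q(0) ≠ 0, a ≥ 1, b = 2a, and r = −q². Then there exist C, D in the Iwahori subgroup 𝓑 such that C·(g·p(Y))·D is the monomial matrix with rows (0, −t^{a}, 0), (−t^{a}, 0, 0), (0, 0, −t^{−2a}); in particular g·p(Y) lies in the corresponding Iwahori double coset 𝓑·w·𝓑 in SL_3(F). -/

import Mathlib

/-! Statement 19 (Case 3 of the Proposition in §7 of "Cotangent bundle to the Flag
variety-I", for `SL₃`): if `q(0) ≠ 0`, `a ≥ 1`, `b = 2a` and `r = −q²`, then there
are `C, D` in the Iwahori subgroup `𝓑` with `C·(g·p(Y))·D` equal to the monomial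
matrix with rows `(0, −t^a, 0)`, `(−t^a, 0, 0)`, `(0, 0, −t^{-2a})`. -/

noncomputable section

/-- The field of formal Laurent series over `ℂ`. -/
abbrev FF : Type := LaurentSeries ℂ

/-- The uniformizer `t` of `ℂ((t))`. -/
def tF : FF := HahnSeries.single (1 : ℤ) (1 : ℂ)

/-- An element of `F = ℂ((t))` is integral if it lies in `A = ℂ[[t]]`,
i.e. all coefficients of negative index vanish. -/
def Integral (x : FF) : Prop := ∀ m : ℤ, m < 0 → x.coeff m = 0

/-- Membership in the Iwahori subgroup `𝓑` of `SL₃(F)`: all entries integral,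
determinant `1`, and the matrix of constant terms `h(0)` is upper triangular. -/
def MemIwahori (h : Matrix (Fin 3) (Fin 3) FF) : Prop :=
  h.det = 1 ∧ (∀ i j : Fin 3, Integral (h i j)) ∧
    ∀ i j : Fin 3, (j : ℕ) < (i : ℕ) → (h i j).coeff 0 = 0

/-- The matrix `g·p(Y)` where `Y = E₁₂ + E₂₃`, `g = −(E₁₃ + E₂₂ + E₃₁)` and
`p(Y) = Id − t^{-a}·q·Y − t^{-b}·r·Y²`; explicitly it has rows
`(0, 0, −1)`, `(0, −1, t^{-a}q)`, `(−1, t^{-a}q, t^{-b}r)`. -/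
def gpY (q r : PowerSeries ℂ) (a b : ℕ) : Matrix (Fin 3) (Fin 3) FF :=
  !![0,  0,                       -1;
     0,  -1,                      tF ^ (-(a : ℤ)) * (q : FF);
     -1, tF ^ (-(a : ℤ)) * (q : FF), tF ^ (-(b : ℤ)) * (r : FF)]

/-! Since `q(0) ≠ 0`, `q` is a unit of `A`. Writing `T = t^a`, the hypotheses `b = 2a` and
`r = -q²` turn `g·p(Y)` into a matrix whose entries are `0`, `-1`, `T⁻¹q` and `-T⁻²q²`, and
`C = leftReducer T q⁻¹`, `D = rightReducer T q q⁻¹` reduce it to the monomial matrix by an identity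
that only uses `T·T⁻¹ = 1` and `q·q⁻¹ = 1`. Both factors have entries in `A` and determinant `1`,
and `D(0)` is upper triangular because `T(0) = 0` for `a ≥ 1`. -/

section Reducers

variable {R S : Type*} [CommRing R] [CommRing S]

def leftReducer (T u : R) : Matrix (Fin 3) (Fin 3) R :=
  !![1, 0, -(T ^ 2 * u ^ 2); 0, 1, T * u; 0, 0, 1]

def rightReducer (T Q u : R) : Matrix (Fin 3) (Fin 3) R :=
  !![Q, 0, 0; T, Q, 0; 0, T, u ^ 2]

lemma det_leftReducer (T u : R) : (leftReducer T u).det = 1 := by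
  simp [leftReducer, Matrix.det_fin_three]

lemma det_rightReducer (T Q u : R) : (rightReducer T Q u).det = (Q * u) ^ 2 := by
  simp only [rightReducer, Matrix.det_fin_three, Matrix.of_apply, Matrix.cons_val',
    Matrix.cons_val_zero, Matrix.cons_val_fin_one, Matrix.cons_val_one, Matrix.cons_val,
    mul_zero, zero_mul, sub_zero, add_zero]
  ring

lemma map_leftReducer (f : R →+* S) (T u : R) :
    (leftReducer T u).map f = leftReducer (f T) (f u) := by
  ext i j; fin_cases i <;> fin_cases j <;> simp [leftReducer]

lemma map_rightReducer (f : R →+* S) (T Q u : R) :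
    (rightReducer T Q u).map f = rightReducer (f T) (f Q) (f u) := by
  ext i j; fin_cases i <;> fin_cases j <;> simp [rightReducer]

lemma leftReducer_mul_mul_rightReducer {T T' Q u : R} (hTT' : T * T' = 1) (hQu : Q * u = 1) :
    leftReducer T u * !![0, 0, -1; 0, -1, T' * Q; -1, T' * Q, -(T' ^ 2 * Q ^ 2)] *
        rightReducer T Q u = !![0, -T, 0; -T, 0, 0; 0, 0, -T' ^ 2] := by
  simp only [leftReducer, rightReducer, Matrix.mul_fin_three]
  ext i j
  fin_cases i <;> fin_cases j <;>
    simp only [Matrix.of_apply, Matrix.cons_val', Matrix.cons_val_zero, Matrix.cons_val_one,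
      Matrix.cons_val, Matrix.cons_val_fin_one, Fin.isValue, Fin.zero_eta, Fin.mk_one,
      Fin.reduceFinMk] <;> grind

end Reducers

lemma integral_coe (f : PowerSeries ℂ) : Integral (f : FF) := by
  intro m hm
  rw [PowerSeries.coeff_coe, if_pos hm]

lemma memIwahori_map_coe (M : Matrix (Fin 3) (Fin 3) (PowerSeries ℂ)) (hdet : M.det = 1)
    (hlow : ∀ i j : Fin 3, (j : ℕ) < (i : ℕ) → PowerSeries.constantCoeff (M i j) = 0) :
    MemIwahori (M.map (HahnSeries.ofPowerSeries ℤ ℂ)) := by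
  refine ⟨?_, fun i j => integral_coe (M i j), fun i j hij => ?_⟩
  · rw [← RingHom.mapMatrix_apply, ← RingHom.map_det, hdet, map_one]
  · simpa [PowerSeries.coeff_coe] using hlow i j hij

lemma tF_ne_zero : tF ≠ 0 :=
  HahnSeries.single_ne_zero one_ne_zero

lemma tF_zpow_natCast (a : ℕ) : tF ^ (a : ℤ) = ((PowerSeries.X ^ a : PowerSeries ℂ) : FF) := by
  rw [zpow_natCast, PowerSeries.coe_pow, PowerSeries.coe_X]
  rfl

lemma tF_zpow_neg_two_mul (a : ℕ) : tF ^ (-((2 * a : ℕ) : ℤ)) = (tF ^ (a : ℤ))⁻¹ ^ 2 := by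
  rw [zpow_neg, Nat.cast_mul, mul_comm, zpow_mul, zpow_natCast, inv_pow]

lemma gpY_neg_sq_two_mul (q : PowerSeries ℂ) (a : ℕ) :
    gpY q (-q ^ 2) a (2 * a) =
      !![0, 0, -1; 0, -1, (tF ^ (a : ℤ))⁻¹ * q; -1, (tF ^ (a : ℤ))⁻¹ * q,
        -((tF ^ (a : ℤ))⁻¹ ^ 2 * (q : FF) ^ 2)] := by
  rw [gpY, ← tF_zpow_neg_two_mul, zpow_neg]
  push_cast
  ring_nf

theorem stmt19 (q r : PowerSeries ℂ) (a b : ℕ) (ha : 1 ≤ a)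
    (hq : PowerSeries.constantCoeff q ≠ 0)
    (hab : b = 2 * a) (hrq : r = -q ^ 2) :
    ∃ C D : Matrix (Fin 3) (Fin 3) FF, MemIwahori C ∧ MemIwahori D ∧
      C * gpY q r a b * D =
        !![0, -(tF ^ (a : ℤ)), 0;
           -(tF ^ (a : ℤ)), 0, 0;
           0, 0, -(tF ^ (-((2 * a : ℕ) : ℤ)))] := by
  subst hab hrq
  refine ⟨(leftReducer (PowerSeries.X ^ a) q⁻¹).map (HahnSeries.ofPowerSeries ℤ ℂ),
    (rightReducer (PowerSeries.X ^ a) q q⁻¹).map (HahnSeries.ofPowerSeries ℤ ℂ),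
    memIwahori_map_coe _ (det_leftReducer _ _) ?_, memIwahori_map_coe _ ?_ ?_, ?_⟩
  · intro i j hij
    fin_cases i <;> fin_cases j <;> simp [leftReducer] at hij ⊢
  · rw [det_rightReducer, PowerSeries.mul_inv_cancel q hq, one_pow]
  · intro i j hij
    fin_cases i <;> fin_cases j <;> simp [rightReducer, zero_pow (by omega : a ≠ 0)] at hij ⊢
  · rw [map_leftReducer, map_rightReducer, gpY_neg_sq_two_mul, tF_zpow_neg_two_mul,
      ← tF_zpow_natCast]
    refine leftReducer_mul_mul_rightReducer (R := FF) ?_ ?_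
    · exact mul_inv_cancel₀ (zpow_ne_zero _ tF_ne_zero)
    · rw [← map_mul, PowerSeries.mul_inv_cancel q hq, map_one]
end
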